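/- arXiv:2601.06895 — 3 statements merged into one kernel-verified Lean document; each statement's English description precedes it below -/
import Mathlib

section
/- For all positive integers q and n, the integral ∫₀¹ x^{n-1} Li_q(x) dx equals (-1)^{q+1} H_n / n^q - Σ_{j=1}^{q-1} (-1)^j ζ(q-j+1) / n^j, where H_n is the n-th harmonic number, ζ is the Riemann zeta function, and Li_q is the polylogarithm. -/
open scoped BigOperators
open MeasureTheory

/-- harmonic number H_n = ∑_{k=1}^n 1/k -/
noncomputable def harm (n : ℕ) : ℝ := ∑ k ∈ Finset.range n, 1/((k : ℝ)+1)

/-- Riemann zeta at a natural argument, as a real series ∑_{k≥1} 1/k^s -/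
noncomputable def zetaR (s : ℕ) : ℝ := ∑' k : ℕ, 1/((k : ℝ)+1)^s

/-- polylogarithm Li_q(x) = ∑_{k≥1} x^k/k^q -/
noncomputable def polylog (q : ℕ) (x : ℝ) : ℝ := ∑' k : ℕ, x^(k+1)/((k : ℝ)+1)^q

lemma summable_inv_pow {p : ℕ} (hp : 2 ≤ p) :
    Summable (fun k : ℕ => 1/((k:ℝ)+1)^p) := by
  have h : Summable (fun k : ℕ => 1/((k:ℝ))^p) :=
    Real.summable_one_div_nat_pow.2 (by omega)
  have := (summable_nat_add_iff (f := fun k : ℕ => 1/((k:ℝ))^p) 1).2 h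
  simpa [add_comm] using this

lemma summable_core (q n : ℕ) (hq : 1 ≤ q) (hn : 1 ≤ n) :
    Summable (fun k : ℕ => 1/(((k:ℝ)+1)^q * ((n:ℝ)+k+1))) := by
  have h2 : Summable (fun k : ℕ => 1/((k:ℝ)+1)^2) := summable_inv_pow le_rfl
  apply h2.of_nonneg_of_le (fun k => by positivity)
  intro k
  apply one_div_le_one_div_of_le (by positivity)
  have h1 : ((k:ℝ)+1)^2 = ((k:ℝ)+1)^1 * ((k:ℝ)+1) := by ring
  rw [h1]
  have hb : (1:ℝ) ≤ (k:ℝ)+1 := by have := Nat.cast_nonneg (α := ℝ) k; linarith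
  have hn' : (1:ℝ) ≤ (n:ℝ) := by exact_mod_cast hn
  exact mul_le_mul (pow_le_pow_right₀ hb hq) (by linarith) (by positivity) (by positivity)

lemma harm_tail_tendsto (n : ℕ) :
    Filter.Tendsto (fun N : ℕ => harm (n+N) - harm N) Filter.atTop (nhds 0) := by
  have hbound : ∀ N : ℕ, harm (n+N) - harm N ≤ n * (1/((N:ℝ)+1)) := by
    intro N
    have : harm (n+N) - harm N = ∑ k ∈ Finset.Ico N (n+N), 1/((k:ℝ)+1) := by
      rw [Finset.sum_Ico_eq_sub _ (Nat.le_add_left N n)]; rfl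
    rw [this]
    calc ∑ k ∈ Finset.Ico N (n+N), 1/((k:ℝ)+1)
        ≤ ∑ _k ∈ Finset.Ico N (n+N), 1/((N:ℝ)+1) := by
          apply Finset.sum_le_sum
          intro k hk
          have hk' : N ≤ k := (Finset.mem_Ico.1 hk).1
          apply one_div_le_one_div_of_le (by positivity)
          have : (N:ℝ) ≤ (k:ℝ) := by exact_mod_cast hk'
          linarith
      _ = n * (1/((N:ℝ)+1)) := by
          rw [Finset.sum_const, Nat.card_Ico]
          simp [Nat.add_sub_cancel]
  have hnonneg : ∀ N : ℕ, 0 ≤ harm (n+N) - harm N := by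
    intro N
    have h : harm (n+N) - harm N = ∑ k ∈ Finset.Ico N (n+N), 1/((k:ℝ)+1) := by
      rw [Finset.sum_Ico_eq_sub _ (Nat.le_add_left N n)]; rfl
    rw [h]
    exact Finset.sum_nonneg (fun k _ => by positivity)
  have hlim : Filter.Tendsto (fun N : ℕ => (n:ℝ) * (1/((N:ℝ)+1))) Filter.atTop (nhds 0) := by
    have := tendsto_one_div_add_atTop_nhds_zero_nat (𝕜 := ℝ)
    simpa using this.const_mul (n:ℝ)
  exact squeeze_zero hnonneg hbound hlim

lemma partial_sums_base (n : ℕ) :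
    Filter.Tendsto (fun N : ℕ => ∑ k ∈ Finset.range N, (1/((k:ℝ)+1) - 1/((n:ℝ)+k+1)))
      Filter.atTop (nhds (harm n)) := by
  have key : ∀ N : ℕ, ∑ k ∈ Finset.range N, (1/((k:ℝ)+1) - 1/((n:ℝ)+k+1))
      = harm n - (harm (n+N) - harm N) := by
    intro N
    rw [Finset.sum_sub_distrib]
    have h1 : ∑ k ∈ Finset.range N, 1/((k:ℝ)+1) = harm N := rfl
    have h2 : ∑ k ∈ Finset.range N, 1/((n:ℝ)+k+1) = harm (n+N) - harm n := by
      have := Finset.sum_Ico_eq_sub (f := fun k => 1/((k:ℝ)+1)) (Nat.le_add_right n N)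
      rw [Finset.sum_Ico_eq_sum_range] at this
      simp only [Nat.add_sub_cancel_left] at this
      show _ = (∑ x ∈ Finset.range (n+N), 1/((x:ℝ)+1)) - ∑ x ∈ Finset.range n, 1/((x:ℝ)+1)
      rw [← this]
      apply Finset.sum_congr rfl
      intro k _
      push_cast; ring_nf
    rw [h1, h2]; ring
  simp only [key]
  have := (harm_tail_tendsto n)
  simpa using (tendsto_const_nhds (x := harm n)).sub this

lemma hasSum_base (n : ℕ) (hn : 1 ≤ n) :
    HasSum (fun k : ℕ => 1/(((k:ℝ)+1)^1 * ((n:ℝ)+k+1))) (harm n / n) := by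
  have hn0 : (n:ℝ) ≠ 0 := by
    have : (0:ℝ) < n := by exact_mod_cast hn
    linarith
  have hsum : Summable (fun k : ℕ => 1/((k:ℝ)+1) - 1/((n:ℝ)+k+1)) := by
    have := (summable_core 1 n le_rfl hn).mul_left (n:ℝ)
    apply this.congr
    intro k
    have hk : ((k:ℝ)+1) ≠ 0 := by positivity
    have hnk : ((n:ℝ)+k+1) ≠ 0 := by positivity
    field_simp
    ring
  have hg : HasSum (fun k : ℕ => 1/((k:ℝ)+1) - 1/((n:ℝ)+k+1)) (harm n) :=
    (hsum.hasSum_iff_tendsto_nat).2 (partial_sums_base n)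
  have := hg.mul_left ((n:ℝ)⁻¹)
  have heq : (fun k : ℕ => ((n:ℝ)⁻¹ * (1/((k:ℝ)+1) - 1/((n:ℝ)+k+1))))
      = fun k : ℕ => 1/(((k:ℝ)+1)^1 * ((n:ℝ)+k+1)) := by
    funext k
    have hk : ((k:ℝ)+1) ≠ 0 := by positivity
    have hnk : ((n:ℝ)+k+1) ≠ 0 := by positivity
    field_simp
    ring
  rw [heq] at this
  simpa [div_eq_inv_mul] using this

lemma core_rec (q n : ℕ) (hq : 1 ≤ q) (hn : 1 ≤ n) :
    ∑' k : ℕ, 1/(((k:ℝ)+1)^(q+1) * ((n:ℝ)+k+1))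
      = zetaR (q+1) / n - (∑' k : ℕ, 1/(((k:ℝ)+1)^q * ((n:ℝ)+k+1))) / n := by
  have hn0 : (n:ℝ) ≠ 0 := by
    have : (0:ℝ) < n := by exact_mod_cast hn
    linarith
  have h1 : Summable (fun k : ℕ => 1/((k:ℝ)+1)^(q+1) / n) :=
    (summable_inv_pow (by omega)).div_const _
  have h2 : Summable (fun k : ℕ => 1/(((k:ℝ)+1)^q * ((n:ℝ)+k+1)) / n) :=
    ((summable_core q n hq hn).div_const _)
  calc ∑' k : ℕ, 1/(((k:ℝ)+1)^(q+1) * ((n:ℝ)+k+1))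
      = ∑' k : ℕ, (1/((k:ℝ)+1)^(q+1)/n - 1/(((k:ℝ)+1)^q * ((n:ℝ)+k+1))/n) := by
        apply tsum_congr
        intro k
        have hk : ((k:ℝ)+1) ≠ 0 := by positivity
        have hkq : ((k:ℝ)+1)^q ≠ 0 := by positivity
        have hnk : ((n:ℝ)+k+1) ≠ 0 := by positivity
        rw [pow_succ]
        field_simp
        ring
    _ = (∑' k : ℕ, 1/((k:ℝ)+1)^(q+1)/n) - ∑' k : ℕ, 1/(((k:ℝ)+1)^q * ((n:ℝ)+k+1))/n :=
        Summable.tsum_sub h1 h2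
    _ = zetaR (q+1) / n - (∑' k : ℕ, 1/(((k:ℝ)+1)^q * ((n:ℝ)+k+1))) / n := by
        rw [tsum_div_const, tsum_div_const]
        rfl

lemma core_eq (q n : ℕ) (hq : 1 ≤ q) (hn : 1 ≤ n) :
    ∑' k : ℕ, 1/(((k:ℝ)+1)^q * ((n:ℝ)+k+1))
      = (-1)^(q+1) * harm n / (n:ℝ)^q
        - ∑ i ∈ Finset.range (q-1), (-1)^(i+1) * zetaR (q-i) / (n:ℝ)^(i+1) := by
  have hn0 : (n:ℝ) ≠ 0 := by
    have : (0:ℝ) < n := by exact_mod_cast hn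
    linarith
  induction q, hq using Nat.le_induction with
  | base =>
    simp only [Nat.sub_self, Finset.range_zero, Finset.sum_empty, sub_zero]
    rw [(hasSum_base n hn).tsum_eq]
    norm_num
  | succ q hq ih =>
    rw [core_rec q n hq hn, ih]
    obtain ⟨m, rfl⟩ : ∃ m, q = m + 1 := ⟨q - 1, by omega⟩
    simp only [Nat.add_sub_cancel]
    rw [Finset.sum_range_succ' (fun i => (-1:ℝ)^(i+1) * zetaR (m+2-i) / (n:ℝ)^(i+1)) m]
    have harg : ∀ i : ℕ, m+2-(i+1) = m+1-i := fun i => by omega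
    simp only [harg, Nat.sub_zero]
    have hnm : (n:ℝ)^(m+1) ≠ 0 := pow_ne_zero _ hn0
    have e1 : ∀ x ∈ Finset.range m,
        (-1:ℝ)^(x+1+1) * zetaR (m+1-x) / (n:ℝ)^(x+1+1)
          = -(((-1:ℝ)^(x+1) * zetaR (m+1-x) / (n:ℝ)^(x+1))/n) := by
      intro x _
      have hx : (n:ℝ)^(x+1) ≠ 0 := pow_ne_zero _ hn0
      rw [pow_succ (-1:ℝ), pow_succ (n:ℝ)]
      field_simp
    rw [Finset.sum_congr rfl e1, Finset.sum_neg_distrib, ← Finset.sum_div]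
    set S := ∑ x ∈ Finset.range m, (-1:ℝ)^(x+1) * zetaR (m+1-x) / (n:ℝ)^(x+1) with hS
    field_simp
    ring

lemma integral_norm_eq (m : ℕ) (c : ℝ) (hc : 0 < c) :
    ∫ x in Set.Ioc (0:ℝ) 1, ‖x^m / c‖ = 1/(c * (m+1)) := by
  have h1 : ∫ x in Set.Ioc (0:ℝ) 1, ‖x^m / c‖ = ∫ x in Set.Ioc (0:ℝ) 1, x^m / c := by
    apply setIntegral_congr_fun measurableSet_Ioc
    intro x hx
    have hx0 : 0 < x := hx.1
    show ‖x^m / c‖ = x^m / c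
    rw [Real.norm_eq_abs, abs_of_nonneg (by positivity)]
  rw [h1, integral_div, ← intervalIntegral.integral_of_le zero_le_one,
    integral_pow]
  norm_num
  ring

lemma integral_eq_core (q n : ℕ) (hq : 1 ≤ q) (hn : 1 ≤ n) :
    ∫ x in (0:ℝ)..1, x^(n-1) * polylog q x
      = ∑' k : ℕ, 1/(((k:ℝ)+1)^q * ((n:ℝ)+k+1)) := by
  have hpt : ∀ x : ℝ, x^(n-1) * polylog q x = ∑' k : ℕ, x^(n+k)/((k:ℝ)+1)^q := by
    intro x
    rw [polylog, ← tsum_mul_left]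
    apply tsum_congr
    intro k
    rw [← mul_div_assoc, ← pow_add]
    congr 2
    omega
  simp only [hpt]
  rw [intervalIntegral.integral_of_le zero_le_one]
  have hc : ∀ k : ℕ, (0:ℝ) < ((k:ℝ)+1)^q := fun k => by positivity
  have hF_int : ∀ k : ℕ, Integrable (fun x : ℝ => x^(n+k)/((k:ℝ)+1)^q)
      (volume.restrict (Set.Ioc (0:ℝ) 1)) := by
    intro k
    have : Continuous (fun x : ℝ => x^(n+k)/((k:ℝ)+1)^q) :=
      (continuous_pow (n+k)).div_const _
    exact (this.integrableOn_Icc.mono_set Set.Ioc_subset_Icc_self)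
  have hval : ∀ k : ℕ, (1:ℝ)/(((k:ℝ)+1)^q * ((n:ℝ)+(k:ℝ)+1))
      = 1/(((k:ℝ)+1)^q * (((n+k:ℕ):ℝ)+1)) := by
    intro k; push_cast; ring_nf
  have hF_sum : Summable (fun k : ℕ =>
      ∫ x in Set.Ioc (0:ℝ) 1, ‖x^(n+k)/((k:ℝ)+1)^q‖) := by
    have heq : (fun k : ℕ => ∫ x in Set.Ioc (0:ℝ) 1, ‖x^(n+k)/((k:ℝ)+1)^q‖)
        = fun k : ℕ => 1/(((k:ℝ)+1)^q * ((n:ℝ)+k+1)) := by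
      funext k
      rw [integral_norm_eq _ _ (hc k)]
      push_cast
      ring_nf
    rw [heq]
    exact summable_core q n hq hn
  rw [← MeasureTheory.integral_tsum_of_summable_integral_norm hF_int hF_sum]
  apply tsum_congr
  intro k
  have h1 : ∫ x in Set.Ioc (0:ℝ) 1, x^(n+k)/((k:ℝ)+1)^q
      = ∫ x in Set.Ioc (0:ℝ) 1, ‖x^(n+k)/((k:ℝ)+1)^q‖ := by
    symm
    apply setIntegral_congr_fun measurableSet_Ioc
    intro x hx
    have hx0 : 0 < x := hx.1
    show ‖x^(n+k) / ((k:ℝ)+1)^q‖ = x^(n+k) / ((k:ℝ)+1)^q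
    rw [Real.norm_eq_abs, abs_of_nonneg (by positivity)]
  rw [h1, integral_norm_eq _ _ (hc k)]
  push_cast
  ring_nf

theorem stmt0 (q n : ℕ) (hq : 0 < q) (hn : 0 < n) :
    ∫ x in (0:ℝ)..1, x^(n-1) * polylog q x
      = (-1)^(q+1) * harm n / (n : ℝ)^q
        - ∑ j ∈ Finset.Icc 1 (q-1), (-1)^j * zetaR (q-j+1) / (n : ℝ)^j := by
  rw [integral_eq_core q n hq hn, core_eq q n hq hn]
  congr 1
  rw [show Finset.Icc 1 (q-1) = Finset.Ico 1 q by
    rw [← Finset.Ico_add_one_right_eq_Icc]; congr 1; omega]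
  rw [Finset.sum_Ico_eq_sum_range]
  apply Finset.sum_congr rfl
  intro i hi
  have hi' : i < q - 1 := by simpa using hi
  have h1 : q-(1+i)+1 = q - i := by omega
  have h2 : 1+i = i+1 := by omega
  rw [h1, h2]
end

section
/- For positive integers p, q, n, the p-th derivative with respect to n (treating n as a real variable) of H_{nk}/n^q equals ((-1)^p p!/n^{p+q}) C(p+q-1, p) H_{nk} + ((-1)^p p!/n^{p+q}) Σ_{r=1}^{p} C(p+q-r-1, p-r) (nk)^r (H_{nk}^{(r+1)} - ζ(r+1)), where H_x^{(s)} = Σ_{j=1}^∞ (1/j^s - 1/(j+x)^s) is the generalized harmonic function of real argument x. -/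
open scoped BigOperators

/-- generalized harmonic function H_x^{(s)} = ∑_{j≥1} (1/j^s - 1/(j+x)^s) -/
noncomputable def Hgen (s : ℕ) (x : ℝ) : ℝ :=
  ∑' j : ℕ, (1/((j : ℝ)+1)^s - 1/(((j : ℝ)+1)+x)^s)

lemma summable_zeta (s : ℕ) (hs : 2 ≤ s) :
    Summable fun j : ℕ => 1/((j:ℝ)+1)^s := by
  have := (summable_nat_add_iff (f := fun n : ℕ => 1/(n:ℝ)^s) 1).2
    ((Real.summable_one_div_nat_pow).2 hs)
  simpa using this

lemma summable_shift (s : ℕ) (hs : 2 ≤ s) (x : ℝ) (hx : 0 ≤ x) :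
    Summable fun j : ℕ => 1/(((j:ℝ)+1)+x)^s := by
  refine (summable_zeta s hs).of_nonneg_of_le (fun j => by positivity) (fun j => ?_)
  have h1 : (0:ℝ) < ((j:ℝ)+1)^s := by positivity
  exact one_div_le_one_div_of_le h1 (pow_le_pow_left₀ (by positivity) (by linarith) s)

lemma summable_Hgen (s : ℕ) (hs : 1 ≤ s) (x : ℝ) (hx : 0 ≤ x) :
    Summable fun j : ℕ => (1/((j:ℝ)+1)^s - 1/(((j:ℝ)+1)+x)^s) := by
  rcases Nat.lt_or_ge s 2 with h2 | h2
  · interval_cases s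
    · have hb : Summable fun j : ℕ => x * (1/((j:ℝ)+1)^2) :=
        (summable_zeta 2 le_rfl).mul_left x
      refine hb.of_nonneg_of_le (fun j => ?_) (fun j => ?_)
      · have h1 : (0:ℝ) < (j:ℝ)+1 := by positivity
        simp only [pow_one]
        have := one_div_le_one_div_of_le h1 (by linarith : (j:ℝ)+1 ≤ ((j:ℝ)+1)+x)
        linarith
      · have h1 : (0:ℝ) < (j:ℝ)+1 := by positivity
        have h2 : (0:ℝ) < ((j:ℝ)+1)+x := by positivity
        simp only [pow_one]
        rw [div_sub_div _ _ (ne_of_gt h1) (ne_of_gt h2)]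
        rw [div_le_iff₀ (by positivity)]
        have : (1:ℝ) * (((j:ℝ)+1)+x) - ((j:ℝ)+1) * 1 = x := by ring
        rw [this]
        have hle : ((j:ℝ)+1)^2 ≤ ((j:ℝ)+1) * (((j:ℝ)+1)+x) := by nlinarith
        calc x = x * (1/((j:ℝ)+1)^2) * ((j:ℝ)+1)^2 := by field_simp
          _ ≤ x * (1/((j:ℝ)+1)^2) * (((j:ℝ)+1) * (((j:ℝ)+1)+x)) := by
              apply mul_le_mul_of_nonneg_left hle (by positivity)
  · exact (summable_zeta s h2).sub (summable_shift s h2 x hx)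

lemma zeta_sub_Hgen (s : ℕ) (hs : 2 ≤ s) (x : ℝ) (hx : 0 ≤ x) :
    zetaR s - Hgen s x = ∑' j : ℕ, 1/(((j:ℝ)+1)+x)^s := by
  rw [Hgen, zetaR, Summable.tsum_sub (summable_zeta s hs) (summable_shift s hs x hx)]
  ring

lemma term_hasDerivAt (s j : ℕ) (y : ℝ) (hy : 0 < y) :
    HasDerivAt (fun z : ℝ => 1/((j:ℝ)+1)^s - 1/(((j:ℝ)+1)+z)^s)
      ((s:ℝ)/(((j:ℝ)+1)+y)^(s+1)) y := by
  have hne : ((j:ℝ)+1)+y ≠ 0 := by positivity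
  have h1 : HasDerivAt (fun z : ℝ => ((j:ℝ)+1)+z) 1 y := by
    simpa using (hasDerivAt_id y).const_add ((j:ℝ)+1)
  have h2 : HasDerivAt (fun z : ℝ => (((j:ℝ)+1)+z)^s)
      ((s:ℝ)*(((j:ℝ)+1)+y)^(s-1)) y := by
    simpa using (h1.fun_pow s)
  have h3 := (h2.fun_inv (by positivity)).const_sub (1/((j:ℝ)+1)^s)
  convert! h3 using 1
  · funext z; simp [one_div]
  · rcases s with _ | m
    · simp
    · rw [Nat.add_sub_cancel]
      field_simp
      rw [pow_succ, pow_succ]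
      ring_nf

lemma hasDerivAt_Hgen (s : ℕ) (hs : 1 ≤ s) (x : ℝ) (hx : 0 < x) :
    HasDerivAt (fun y => Hgen s y) ((s:ℝ) * (zetaR (s+1) - Hgen (s+1) x)) x := by
  have hs2 : 2 ≤ s + 1 := by omega
  have key := hasDerivAt_tsum_of_isPreconnected
    (u := fun j : ℕ => (s:ℝ) * (1/((j:ℝ)+1)^(s+1)))
    (t := Set.Ioi (0:ℝ))
    (g := fun (j : ℕ) (z : ℝ) => 1/((j:ℝ)+1)^s - 1/(((j:ℝ)+1)+z)^s)
    (g' := fun (j : ℕ) (y : ℝ) => (s:ℝ)/(((j:ℝ)+1)+y)^(s+1))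
    (y₀ := x) (y := x)
    ((summable_zeta (s+1) hs2).mul_left (s:ℝ))
    isOpen_Ioi isPreconnected_Ioi
    (fun j y hy => term_hasDerivAt s j y hy)
    (fun j y hy => ?_) hx (summable_Hgen s hs x hx.le) hx
  · have heq : (∑' j : ℕ, (s:ℝ)/(((j:ℝ)+1)+x)^(s+1))
        = (s:ℝ) * (zetaR (s+1) - Hgen (s+1) x) := by
      rw [zeta_sub_Hgen (s+1) hs2 x hx.le, ← tsum_mul_left]
      simp only [mul_one_div]
    rw [← heq]
    exact key
  · have hy' : (0:ℝ) < y := hy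
    show ‖(s:ℝ)/(((j:ℝ)+1)+y)^(s+1)‖ ≤ (s:ℝ) * (1/((j:ℝ)+1)^(s+1))
    rw [Real.norm_eq_abs, abs_of_nonneg (by positivity), div_eq_mul_one_div]
    apply mul_le_mul_of_nonneg_left _ (by positivity)
    have h1 : (0:ℝ) < ((j:ℝ)+1)^(s+1) := by positivity
    exact one_div_le_one_div_of_le h1 (pow_le_pow_left₀ (by positivity) (by linarith) _)

lemma nat_id (p q r : ℕ) (hr : r ≤ p) (hq : 1 ≤ q) :
    (p+q-r) * Nat.choose (p+q-r-1) (p-r) + r * Nat.choose (p+q-r) (p-r+1)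
      = (p+1) * Nat.choose (p+q-r) (p+1-r) := by
  obtain ⟨a, rfl⟩ : ∃ a, p = r + a := ⟨p - r, by omega⟩
  obtain ⟨m, rfl⟩ : ∃ m, q = m + 1 := ⟨q-1, by omega⟩
  have h2 : r + a + (m+1) - r - 1 = a + m := by omega
  have h1 : r + a + (m+1) - r = a + m + 1 := by omega
  have h3 : r + a - r = a := by omega
  have h4 : r + a + 1 - r = a + 1 := by omega
  rw [h2, h1, h3, h4]
  have h5 : (a+m+1) * Nat.choose (a+m) a = Nat.choose (a+m+1) (a+1) * (a+1) := by
    simpa [Nat.succ_eq_add_one] using Nat.add_one_mul_choose_eq (a+m) a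
  rw [h5]
  ring

lemma key_sum (p q : ℕ) (hq : 1 ≤ q) (g : ℕ → ℝ) :
    (p+q:ℝ) * ∑ r ∈ Finset.range (p+1), (Nat.choose (p+q-r-1) (p-r) : ℝ) * g r
      + ∑ r ∈ Finset.range (p+1), (Nat.choose (p+q-r-1) (p-r) : ℝ) *
          ((r+1:ℝ) * g (r+1) - (r:ℝ) * g r)
    = (p+1:ℝ) * ∑ r ∈ Finset.range (p+2), (Nat.choose (p+q-r) (p+1-r) : ℝ) * g r := by
  have L1 : (p+q:ℝ) * ∑ r ∈ Finset.range (p+1), (Nat.choose (p+q-r-1) (p-r) : ℝ) * g r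
      + ∑ r ∈ Finset.range (p+1), (Nat.choose (p+q-r-1) (p-r) : ℝ) *
          ((r+1:ℝ) * g (r+1) - (r:ℝ) * g r)
      = ∑ r ∈ Finset.range (p+1), ((p+q:ℝ)-r) * (Nat.choose (p+q-r-1) (p-r) : ℝ) * g r
      + ∑ r ∈ Finset.range (p+1), ((r:ℝ)+1) * (Nat.choose (p+q-r-1) (p-r) : ℝ) * g (r+1) := by
    rw [Finset.mul_sum, ← Finset.sum_add_distrib, ← Finset.sum_add_distrib]
    exact Finset.sum_congr rfl (fun r _ => by ring)
  rw [L1]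
  rw [Finset.sum_range_succ'
    (fun r => ((p+q:ℝ)-r) * (Nat.choose (p+q-r-1) (p-r) : ℝ) * g r) p]
  rw [Finset.sum_range_succ
    (fun r => ((r:ℝ)+1) * (Nat.choose (p+q-r-1) (p-r) : ℝ) * g (r+1)) p]
  rw [Finset.sum_range_succ'
    (fun r => (Nat.choose (p+q-r) (p+1-r) : ℝ) * g r) (p+1)]
  rw [Finset.sum_range_succ
    (fun i => (Nat.choose (p+q-(i+1)) (p+1-(i+1)) : ℝ) * g (i+1)) p]
  have hterm : ∀ i ∈ Finset.range p,
      ((p:ℝ) + q - ((i:ℕ)+1 : ℕ)) * ((p+q-(i+1)-1).choose (p-(i+1)) : ℝ) * g (i+1)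
        + ((i:ℝ) + 1) * ((p+q-i-1).choose (p-i) : ℝ) * g (i+1)
      = ((p:ℝ)+1) * (((p+q-(i+1)).choose (p+1-(i+1)) : ℝ) * g (i+1)) := by
    intro i hi
    have hi' : i < p := Finset.mem_range.1 hi
    have hnat := nat_id p q (i+1) (by omega) hq
    have e2 : p-(i+1)+1 = p-i := by omega
    rw [e2] at hnat
    have c1 : ((p+q-(i+1) : ℕ) : ℝ) = (p:ℝ) + q - ((i+1 : ℕ) : ℝ) := by
      rw [Nat.cast_sub (by omega)]; push_cast; try ring
    rw [show p+q-i-1 = p+q-(i+1) from by omega, show p-i = p-(i+1)+1 from by omega, e2]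
    have hcast := congrArg (fun x : ℕ => (x : ℝ)) hnat
    push_cast at hcast
    rw [c1] at hcast
    push_cast at hcast ⊢
    linear_combination g (i+1) * hcast
  have hsum :
      (∑ i ∈ Finset.range p,
        ((p:ℝ) + q - ((i:ℕ)+1 : ℕ)) * ((p+q-(i+1)-1).choose (p-(i+1)) : ℝ) * g (i+1))
      + (∑ i ∈ Finset.range p,
        ((i:ℝ) + 1) * ((p+q-i-1).choose (p-i) : ℝ) * g (i+1))
      = ((p:ℝ)+1) * ∑ i ∈ Finset.range p,
          ((p+q-(i+1)).choose (p+1-(i+1)) : ℝ) * g (i+1) := by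
    rw [← Finset.sum_add_distrib, Finset.mul_sum]
    exact Finset.sum_congr rfl hterm
  have h0 : ((p:ℝ) + q - ((0:ℕ):ℝ)) * ((p+q-0-1).choose (p-0) : ℝ) * g 0
      = ((p:ℝ)+1) * (((p+q-0).choose (p+1-0) : ℝ) * g 0) := by
    have hnat := nat_id p q 0 (by omega) hq
    simp only [Nat.sub_zero, Nat.zero_eq, zero_mul, add_zero] at hnat ⊢
    have hcast := congrArg (fun x : ℕ => (x : ℝ)) hnat
    push_cast at hcast
    linear_combination g 0 * hcast
  have hp1 : ((p:ℝ) + 1) * ((p+q-p-1).choose (p-p) : ℝ) * g (p+1)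
      = ((p:ℝ)+1) * (((p+q-(p+1)).choose (p+1-(p+1)) : ℝ) * g (p+1)) := by
    have e1 : p+q-p-1 = q-1 := by omega
    have e2 : p-p = 0 := by omega
    have e3 : p+q-(p+1) = q-1 := by omega
    have e4 : p+1-(p+1) = 0 := by omega
    rw [e1, e2, e3, e4]
    ring
  push_cast
  push_cast at hsum h0 hp1
  linear_combination hsum + h0 + hp1

noncomputable def Gfun (k : ℕ) : ℕ → ℝ → ℝ
  | 0 => fun t => Hgen 1 (t * k)
  | (r+1) => fun t => (t * k)^(r+1) * (Hgen (r+2) (t * k) - zetaR (r+2))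

lemma Gfun_hasDerivAt (k : ℕ) (hk : 0 < k) (r : ℕ) (t : ℝ) (ht : 0 < t) :
    HasDerivAt (Gfun k r)
      (((r:ℝ)/t) * Gfun k r t - (((r:ℝ)+1)/t) * Gfun k (r+1) t) t := by
  have hk' : (0:ℝ) < k := by exact_mod_cast hk
  have htk : 0 < t * k := by positivity
  have hinner : HasDerivAt (fun s : ℝ => s * k) (k:ℝ) t := by
    simpa using (hasDerivAt_id t).mul_const (k:ℝ)
  match r with
  | 0 =>
    have h := (hasDerivAt_Hgen 1 le_rfl (t*k) htk).comp t hinner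
    have h0 : HasDerivAt (Gfun k 0) ((((1:ℕ)):ℝ) * (zetaR (1+1) - Hgen (1+1) (t*k)) * (k:ℝ)) t := h
    convert h0 using 1
    simp only [Gfun]
    field_simp
    ring
  | (r+1) =>
    have h1 : HasDerivAt (fun s : ℝ => (s*k)^(r+1))
        ((((r:ℝ)+1)) * (t*k)^r * k) t := by
      have := (hinner.fun_pow (r+1))
      simpa using this
    have h2 : HasDerivAt (fun s : ℝ => Hgen (r+2) (s*k) - zetaR (r+2))
        ((((r:ℝ)+2) * (zetaR (r+3) - Hgen (r+3) (t*k))) * k) t := by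
      have := ((hasDerivAt_Hgen (r+2) (by omega) (t*k) htk).comp t hinner).sub_const
        (zetaR (r+2))
      convert! this using 1
      push_cast
      rfl
    have h := h1.fun_mul h2
    have heq : HasDerivAt (Gfun k (r+1))
        ((((r:ℝ)+1)) * (t*k)^r * k * (Hgen (r+2) (t*k) - zetaR (r+2))
          + (t*k)^(r+1) * ((((r:ℝ)+2) * (zetaR (r+3) - Hgen (r+3) (t*k))) * k)) t := h
    convert heq using 1
    simp only [Gfun]
    push_cast
    field_simp
    ring

lemma hasDerivAt_const_div_pow (A : ℝ) (m : ℕ) (hm : 1 ≤ m) (t : ℝ) (ht : t ≠ 0) :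
    HasDerivAt (fun s : ℝ => A / s^m) (-(A*m)/t^(m+1)) t := by
  obtain ⟨m', rfl⟩ : ∃ m', m = m' + 1 := ⟨m-1, by omega⟩
  have h := ((hasDerivAt_pow (m'+1) t).fun_inv (pow_ne_zero _ ht)).const_mul A
  convert! h using 1
  simp only [Nat.add_sub_cancel]
  field_simp
  ring

lemma main_formula (q k : ℕ) (hq : 0 < q) (hk : 0 < k) (p : ℕ) :
    ∀ t : ℝ, 0 < t →
    iteratedDeriv p (fun t : ℝ => Hgen 1 (t * k) / t^q) t
      = (-1)^p * (p.factorial:ℝ) / t^(p+q) *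
          ∑ r ∈ Finset.range (p+1), ((p+q-r-1).choose (p-r) : ℝ) * Gfun k r t := by
  induction p with
  | zero =>
    intro t ht
    simp only [iteratedDeriv_zero, Nat.factorial_zero, pow_zero, Nat.zero_add,
      Nat.cast_one, zero_add]
    rw [Finset.sum_range_one]
    simp only [Nat.sub_zero, Gfun, Nat.choose_zero_right, Nat.cast_one]
    ring
  | succ p ih =>
    intro t ht
    rw [iteratedDeriv_succ]
    have hev : (iteratedDeriv p fun t : ℝ => Hgen 1 (t*k)/t^q)
        =ᶠ[nhds t] (fun s => (-1)^p * (p.factorial:ℝ) / s^(p+q) *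
          ∑ r ∈ Finset.range (p+1), ((p+q-r-1).choose (p-r) : ℝ) * Gfun k r s) := by
      filter_upwards [isOpen_Ioi.mem_nhds ht] with s hs
      exact ih s hs
    rw [hev.deriv_eq]
    have hc : HasDerivAt (fun s : ℝ => (-1:ℝ)^p * (p.factorial:ℝ) / s^(p+q))
        (-(((-1:ℝ)^p * (p.factorial:ℝ))*((p+q:ℕ):ℝ))/t^((p+q)+1)) t :=
      hasDerivAt_const_div_pow _ _ (by omega) t ht.ne'
    have hS : HasDerivAt (fun s : ℝ => ∑ r ∈ Finset.range (p+1),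
          ((p+q-r-1).choose (p-r) : ℝ) * Gfun k r s)
        (∑ r ∈ Finset.range (p+1), ((p+q-r-1).choose (p-r) : ℝ) *
          (((r:ℝ)/t) * Gfun k r t - (((r:ℝ)+1)/t) * Gfun k (r+1) t)) t :=
      HasDerivAt.fun_sum fun r _ => ((Gfun_hasDerivAt k hk r t ht).const_mul _)
    have h := hc.fun_mul hS
    rw [h.deriv]
    -- algebra
    have hkey := key_sum p q hq (fun r => Gfun k r t)
    have hrw : ∀ r ∈ Finset.range (p+2),
        ((p+1+q-r-1).choose (p+1-r) : ℝ) * Gfun k r t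
          = ((p+q-r).choose (p+1-r) : ℝ) * Gfun k r t := by
      intro r _
      congr 3
      omega
    rw [Finset.sum_congr rfl hrw]
    have hm : p+1+q = (p+q)+1 := by omega
    rw [hm]
    have hT : (∑ r ∈ Finset.range (p+1), ((p+q-r-1).choose (p-r) : ℝ) *
          (((r:ℝ)/t) * Gfun k r t - (((r:ℝ)+1)/t) * Gfun k (r+1) t))
        = -(1/t) * ∑ r ∈ Finset.range (p+1), ((p+q-r-1).choose (p-r) : ℝ) *
            (((r:ℝ)+1) * Gfun k (r+1) t - (r:ℝ) * Gfun k r t) := by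
      rw [Finset.mul_sum]
      exact Finset.sum_congr rfl (fun r _ => by ring)
    have hkey2 : (∑ r ∈ Finset.range (p+1), ((p+q-r-1).choose (p-r) : ℝ) *
          (((r:ℝ)+1) * Gfun k (r+1) t - (r:ℝ) * Gfun k r t))
        = ((p:ℝ)+1) * (∑ r ∈ Finset.range (p+2), ((p+q-r).choose (p+1-r) : ℝ) * Gfun k r t)
          - ((p:ℝ)+(q:ℝ)) * (∑ r ∈ Finset.range (p+1), ((p+q-r-1).choose (p-r) : ℝ) * Gfun k r t) := by
      linear_combination hkey
    rw [hT, hkey2]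
    simp only [pow_succ, Nat.factorial_succ]
    push_cast
    ring

theorem stmt1 (p q k : ℕ) (hp : 0 < p) (hq : 0 < q) (hk : 0 < k)
    (n : ℝ) (hn : 0 < n) :
    iteratedDeriv p (fun t : ℝ => Hgen 1 (t * k) / t^q) n
      = ((-1)^p * (p.factorial : ℝ) / n^(p+q)) * (Nat.choose (p+q-1) p : ℝ) * Hgen 1 (n * k)
        + ((-1)^p * (p.factorial : ℝ) / n^(p+q)) *
          ∑ r ∈ Finset.Icc 1 p, (Nat.choose (p+q-r-1) (p-r) : ℝ) * (n * k)^r *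
            (Hgen (r+1) (n * k) - zetaR (r+1)) := by
  have hmain := main_formula q k hq hk p n hn
  rw [hmain]
  rw [Finset.sum_range_succ' (fun r => ((p+q-r-1).choose (p-r) : ℝ) * Gfun k r n) p]
  rw [← Finset.Ico_add_one_right_eq_Icc, Finset.sum_Ico_eq_sum_range]
  simp only [Nat.add_sub_cancel]
  have hsum : ∀ i ∈ Finset.range p,
      ((p+q-(i+1)-1).choose (p-(i+1)) : ℝ) * Gfun k (i+1) n
        = ((p+q-(1+i)-1).choose (p-(1+i)) : ℝ) * (n * k)^(1+i) *
            (Hgen ((1+i)+1) (n * k) - zetaR ((1+i)+1)) := by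
    intro i _
    rw [show 1+i = i+1 from by omega]
    simp only [Gfun]
    ring_nf
  rw [Finset.sum_congr rfl hsum]
  have hf0 : ((p+q-0-1).choose (p-0) : ℝ) * Gfun k 0 n
      = ((p+q-1).choose p : ℝ) * Hgen 1 (n * k) := by
    simp only [Nat.sub_zero, Gfun]
  rw [hf0]
  ring
end

section
/- The series Σ_{k=1}^∞ H_{k/2}/k² equals (11/8) ζ(3), where H_{k/2} = Σ_{j=1}^∞ (1/j - 1/(j + k/2)) is the harmonic function at the half-integer argument k/2. -/
open scoped BigOperators

/-- harmonic function of real argument H_x = ∑_{j≥1} (1/j - 1/(j+x)) -/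
noncomputable def Hreal (x : ℝ) : ℝ :=
  ∑' j : ℕ, (1/((j : ℝ)+1) - 1/(((j : ℝ)+1)+x))

/-- ζ(3) = ∑_{k≥1} 1/k³ -/
noncomputable def zeta3 : ℝ := ∑' k : ℕ, 1/((k : ℝ)+1)^3




noncomputable def Hn (n : ℕ) : ℝ := ∑ i ∈ Finset.range n, 1/((i:ℝ)+1)

lemma Hn_zero : Hn 0 = 0 := by simp [Hn]

lemma Hn_succ (n : ℕ) : Hn (n+1) = Hn n + 1/((n:ℝ)+1) := Finset.sum_range_succ _ n

lemma Hn_nonneg (n : ℕ) : 0 ≤ Hn n := by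
  apply Finset.sum_nonneg; intro i _; positivity

lemma Hn_add (J c : ℕ) : Hn (J + c) = Hn J + ∑ i ∈ Finset.range c, 1/((J:ℝ)+(i:ℝ)+1) := by
  rw [Hn, Finset.sum_range_add]
  congr 1
  apply Finset.sum_congr rfl; intro i _; push_cast; ring_nf

-- summability basics
lemma Sz2 : Summable (fun n : ℕ => 1/((n:ℝ)+1)^2) := by
  have h := (Real.summable_one_div_nat_pow (p := 2)).2 one_lt_two
  have := (summable_nat_add_iff (f := fun n : ℕ => 1/(n:ℝ)^2) 1).2 h
  simpa using this

lemma Sz3 : Summable (fun n : ℕ => 1/((n:ℝ)+1)^3) := by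
  have h := (Real.summable_one_div_nat_pow (p := 3)).2 (by norm_num)
  have := (summable_nat_add_iff (f := fun n : ℕ => 1/(n:ℝ)^3) 1).2 h
  simpa using this

-- telescoping
set_option maxHeartbeats 1000000 in
lemma summable_tele (c : ℕ) :
    Summable (fun n : ℕ => 1/((n:ℝ)+1) - 1/((n:ℝ)+1+(c:ℝ))) := by
  have hg : Summable (fun n : ℕ => (c:ℝ) * (1/((n:ℝ)+1)^2)) := Sz2.mul_left _
  refine Summable.of_nonneg_of_le ?_ ?_ hg
  · intro n
    have h1 : (0:ℝ) < (n:ℝ)+1 := by positivity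
    have : 1/((n:ℝ)+1+(c:ℝ)) ≤ 1/((n:ℝ)+1) := by
      apply one_div_le_one_div_of_le h1; linarith [Nat.cast_nonneg (α := ℝ) c]
    linarith
  · intro n
    have h1 : (0:ℝ) < (n:ℝ)+1 := by positivity
    have h2 : (0:ℝ) < (n:ℝ)+1+(c:ℝ) := by positivity
    rw [div_sub_div _ _ (ne_of_gt h1) (ne_of_gt h2)]
    have hnum : 1*((n:ℝ)+1+(c:ℝ)) - ((n:ℝ)+1)*1 = (c:ℝ) := by ring
    rw [hnum, div_le_iff₀ (by positivity)]
    have hc : (0:ℝ) ≤ (c:ℝ) := Nat.cast_nonneg c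
    have hsq : ((n:ℝ)+1)^2 ≤ ((n:ℝ)+1) * ((n:ℝ)+1+(c:ℝ)) := by nlinarith
    calc (c:ℝ) = (c:ℝ) * (1/((n:ℝ)+1)^2) * ((n:ℝ)+1)^2 := by field_simp
    _ ≤ (c:ℝ) * (1/((n:ℝ)+1)^2) * (((n:ℝ)+1) * ((n:ℝ)+1+(c:ℝ))) := by
        apply mul_le_mul_of_nonneg_left hsq; positivity

lemma hasSum_tele (c : ℕ) :
    HasSum (fun n : ℕ => 1/((n:ℝ)+1) - 1/((n:ℝ)+1+(c:ℝ))) (Hn c) := by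
  have hs := summable_tele c
  have hpartial : ∀ J : ℕ, ∑ n ∈ Finset.range J, (1/((n:ℝ)+1) - 1/((n:ℝ)+1+(c:ℝ)))
      = Hn J + Hn c - Hn (J + c) := by
    intro J
    induction J with
    | zero => simp [Hn_zero]
    | succ J ih =>
      rw [Finset.sum_range_succ, ih, Hn_succ]
      have h3 : J + 1 + c = (J + c) + 1 := by ring
      rw [h3, Hn_succ]
      push_cast
      ring
  have hlim : Filter.Tendsto (fun J : ℕ => Hn J + Hn c - Hn (J + c)) Filter.atTop (nhds (Hn c)) := by
    have key : ∀ J : ℕ, Hn J + Hn c - Hn (J + c) = Hn c - (Hn (J+c) - Hn J) := by intro J; ring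
    simp only [key]
    have h0 : Filter.Tendsto (fun J : ℕ => Hn (J+c) - Hn J) Filter.atTop (nhds 0) := by
      apply squeeze_zero (g := fun J : ℕ => (c:ℝ) * (1/((J:ℝ)+1)))
      · intro J
        rw [Hn_add]
        have hnn : ∀ i ∈ Finset.range c, (0:ℝ) ≤ 1/((J:ℝ)+(i:ℝ)+1) := by intro i _; positivity
        have := Finset.sum_nonneg hnn
        linarith
      · intro J
        rw [Hn_add]
        have hb : ∑ i ∈ Finset.range c, 1/((J:ℝ)+(i:ℝ)+1) ≤ (c:ℝ) * (1/((J:ℝ)+1)) := by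
          calc ∑ i ∈ Finset.range c, 1/((J:ℝ)+(i:ℝ)+1)
              ≤ ∑ _i ∈ Finset.range c, 1/((J:ℝ)+1) := by
                apply Finset.sum_le_sum; intro i _
                apply one_div_le_one_div_of_le (by positivity)
                have : (0:ℝ) ≤ (i:ℝ) := Nat.cast_nonneg i
                linarith
          _ = (c:ℝ) * (1/((J:ℝ)+1)) := by rw [Finset.sum_const, Finset.card_range]; ring
        linarith
      · have h4 : Filter.Tendsto (fun J : ℕ => 1/((J:ℝ)+1)) Filter.atTop (nhds 0) :=
          tendsto_one_div_add_atTop_nhds_zero_nat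
        simpa using h4.const_mul (c:ℝ)
    simpa using (tendsto_const_nhds (x := Hn c)).sub h0
  have ht := hs.hasSum.tendsto_sum_nat
  rw [Filter.tendsto_congr hpartial] at ht
  have heq := tendsto_nhds_unique ht hlim
  exact heq ▸ hs.hasSum

-- kernel
noncomputable def F : ℕ × ℕ → ℝ :=
  fun p => 1/(((p.1:ℝ)+1)*((p.2:ℝ)+1)*((p.1:ℝ)+(p.2:ℝ)+2))

lemma F_nonneg (p : ℕ × ℕ) : 0 ≤ F p := by unfold F; positivity

-- auxiliary: summable (n+1)^{-3/2}
lemma S32 : Summable (fun n : ℕ => 1/(((n:ℝ)+1) * Real.sqrt ((n:ℝ)+1))) := by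
  have h : Summable (fun n : ℕ => ((n:ℝ) ^ ((3:ℝ)/2))⁻¹) :=
    (Real.summable_nat_rpow_inv).2 (by norm_num)
  have h2 := (summable_nat_add_iff (f := fun n : ℕ => ((n:ℝ) ^ ((3:ℝ)/2))⁻¹) 1).2 h
  apply h2.congr
  intro n
  have hpos : (0:ℝ) ≤ (n:ℝ)+1 := by positivity
  have : ((n:ℝ)+1) ^ ((3:ℝ)/2) = ((n:ℝ)+1) * Real.sqrt ((n:ℝ)+1) := by
    rw [show (3:ℝ)/2 = 1 + 1/2 by norm_num, Real.rpow_add (by positivity), Real.rpow_one,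
      ← Real.sqrt_eq_rpow]
  push_cast
  rw [this, one_div]

lemma summable_F : Summable F := by
  have hmul : Summable (fun p : ℕ × ℕ =>
      (1/(((p.1:ℝ)+1) * Real.sqrt ((p.1:ℝ)+1))) * (1/(((p.2:ℝ)+1) * Real.sqrt ((p.2:ℝ)+1)))) :=
    S32.mul_of_nonneg S32 (fun n => by positivity) (fun n => by positivity)
  refine Summable.of_nonneg_of_le F_nonneg ?_ (hmul.mul_left (1/2))
  rintro ⟨m, n⟩
  have hm : (0:ℝ) < (m:ℝ)+1 := by positivity
  have hn : (0:ℝ) < (n:ℝ)+1 := by positivity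
  have hsm : Real.sqrt ((m:ℝ)+1) ^ 2 = (m:ℝ)+1 := Real.sq_sqrt (le_of_lt hm)
  have hsn : Real.sqrt ((n:ℝ)+1) ^ 2 = (n:ℝ)+1 := Real.sq_sqrt (le_of_lt hn)
  have hsmpos : 0 < Real.sqrt ((m:ℝ)+1) := Real.sqrt_pos.2 hm
  have hsnpos : 0 < Real.sqrt ((n:ℝ)+1) := Real.sqrt_pos.2 hn
  have hAM : 2 * (Real.sqrt ((m:ℝ)+1) * Real.sqrt ((n:ℝ)+1)) ≤ ((m:ℝ)+1) + ((n:ℝ)+1) := by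
    nlinarith [sq_nonneg (Real.sqrt ((m:ℝ)+1) - Real.sqrt ((n:ℝ)+1))]
  have hden : 2 * ((((m:ℝ)+1) * Real.sqrt ((m:ℝ)+1)) * (((n:ℝ)+1) * Real.sqrt ((n:ℝ)+1)))
      ≤ (((m:ℝ)+1)*((n:ℝ)+1)*((m:ℝ)+(n:ℝ)+2)) := by
    have expand : (((m:ℝ)+1)*((n:ℝ)+1)*((m:ℝ)+(n:ℝ)+2))
        = ((m:ℝ)+1)*((n:ℝ)+1) * (((m:ℝ)+1) + ((n:ℝ)+1)) := by ring
    rw [expand]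
    calc 2 * ((((m:ℝ)+1) * Real.sqrt ((m:ℝ)+1)) * (((n:ℝ)+1) * Real.sqrt ((n:ℝ)+1)))
        = ((m:ℝ)+1)*((n:ℝ)+1) * (2 * (Real.sqrt ((m:ℝ)+1) * Real.sqrt ((n:ℝ)+1))) := by ring
    _ ≤ ((m:ℝ)+1)*((n:ℝ)+1) * (((m:ℝ)+1) + ((n:ℝ)+1)) := by
        apply mul_le_mul_of_nonneg_left hAM; positivity
  show F (m, n) ≤ _
  unfold F
  simp only
  rw [div_le_iff₀ (by positivity)]
  have key : (1/2) * ((1/(((m:ℝ)+1) * Real.sqrt ((m:ℝ)+1))) * (1/(((n:ℝ)+1) * Real.sqrt ((n:ℝ)+1))))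
      * ((((m:ℝ)+1)*((n:ℝ)+1)*((m:ℝ)+(n:ℝ)+2)))
      = (((m:ℝ)+1)*((n:ℝ)+1)*((m:ℝ)+(n:ℝ)+2)) /
        (2 * ((((m:ℝ)+1) * Real.sqrt ((m:ℝ)+1)) * (((n:ℝ)+1) * Real.sqrt ((n:ℝ)+1)))) := by
    field_simp
  rw [key, le_div_iff₀ (by positivity)]
  linarith [hden]

lemma tsum_tele (c : ℕ) : ∑' n : ℕ, (1/((n:ℝ)+1) - 1/((n:ℝ)+1+(c:ℝ))) = Hn c :=
  (hasSum_tele c).tsum_eq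

lemma tsum_tele' (c : ℕ) (hc : 0 < c) :
    ∑' n : ℕ, 1/(((n:ℝ)+1)*((n:ℝ)+1+(c:ℝ))) = Hn c / (c:ℝ) := by
  have hcR : (0:ℝ) < (c:ℝ) := by exact_mod_cast hc
  have h : ∀ n : ℕ, 1/(((n:ℝ)+1)*((n:ℝ)+1+(c:ℝ)))
      = (1/(c:ℝ)) * (1/((n:ℝ)+1) - 1/((n:ℝ)+1+(c:ℝ))) := by
    intro n
    have h1 : ((n:ℝ)+1) ≠ 0 := by positivity
    have h2 : ((n:ℝ)+1+(c:ℝ)) ≠ 0 := by positivity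
    field_simp
    ring
  rw [tsum_congr h, tsum_mul_left, tsum_tele]
  ring

lemma summable_wF (s : ℕ × ℕ → ℝ) (hs : ∀ p, |s p| ≤ 1) :
    Summable (fun p : ℕ × ℕ => s p * F p) := by
  apply Summable.of_abs
  refine Summable.of_nonneg_of_le (fun p => abs_nonneg _) ?_ summable_F
  intro p
  rw [abs_mul]
  calc |s p| * |F p| ≤ 1 * |F p| := mul_le_mul_of_nonneg_right (hs p) (abs_nonneg _)
  _ = F p := by rw [one_mul, abs_of_nonneg (F_nonneg p)]

lemma F_inner (m : ℕ) : ∑' n : ℕ, F (m, n) = Hn (m+1) / ((m:ℝ)+1)^2 := by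
  have h : ∀ n : ℕ, F (m, n)
      = (1/((m:ℝ)+1)) * (1/(((n:ℝ)+1)*((n:ℝ)+1+((m+1:ℕ):ℝ)))) := by
    intro n
    unfold F
    simp only
    push_cast
    have h1 : ((m:ℝ)+1) ≠ 0 := by positivity
    have h2 : ((n:ℝ)+1) ≠ 0 := by positivity
    have h3 : ((n:ℝ)+1+((m:ℝ)+1)) ≠ 0 := by positivity
    field_simp
    ring
  rw [tsum_congr h, tsum_mul_left, tsum_tele' (m+1) (Nat.succ_pos m)]
  have hc : ((m+1:ℕ):ℝ) = (m:ℝ)+1 := by push_cast; ring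
  rw [hc]
  rw [div_mul_div_comm, one_mul, sq]

lemma fubini_F (t : ℕ → ℝ) (ht : ∀ m, |t m| ≤ 1) :
    ∑' p : ℕ × ℕ, t p.1 * F p = ∑' m : ℕ, t m * (Hn (m+1) / ((m:ℝ)+1)^2) := by
  have hsum := summable_wF (fun p => t p.1) (fun p => ht p.1)
  rw [Summable.tsum_prod hsum]
  apply tsum_congr
  intro m
  have : ∀ n : ℕ, t (m, n).1 * F (m, n) = t m * F (m, n) := fun n => rfl
  rw [tsum_congr this, tsum_mul_left, F_inner]

lemma summable_h : Summable (fun m : ℕ => Hn (m+1) / ((m:ℝ)+1)^2) := by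
  have hf : ∀ m : ℕ, HasSum (fun n => F (m, n)) (Hn (m+1) / ((m:ℝ)+1)^2) := by
    intro m
    have := (summable_F.prod_factor m).hasSum
    rwa [F_inner m] at this
  exact (summable_F.hasSum.prod_fiberwise hf).summable

def diagEquiv : (Σ N : ℕ, Fin (N+1)) ≃ ℕ × ℕ where
  toFun q := ((q.2 : ℕ), q.1 - (q.2 : ℕ))
  invFun p := ⟨p.1 + p.2, ⟨p.1, by omega⟩⟩
  left_inv := by
    rintro ⟨N, i, hi⟩
    have h : (i : ℕ) + (N - i) = N := by omega
    refine Sigma.ext h ?_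
    simp only
    rw [Fin.heq_ext_iff (by rw [h])]
  right_inv := by
    rintro ⟨m, n⟩
    simp only [Prod.mk.injEq]
    constructor
    · trivial
    · omega

lemma diag_finsum (N : ℕ) :
    ∑ i ∈ Finset.range (N+1), F (i, N - i) = 2 * Hn (N+1) / ((N:ℝ)+2)^2 := by
  have key : ∀ i ∈ Finset.range (N+1), F (i, N - i)
      = (1/((N:ℝ)+2)^2) * (1/((i:ℝ)+1) + 1/((((N-i : ℕ)):ℝ)+1)) := by
    intro i hi
    rw [Finset.mem_range] at hi
    have hle : i ≤ N := by omega
    have hcast : (((N - i : ℕ)):ℝ) = (N:ℝ) - (i:ℝ) := by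
      push_cast [hle]
      ring
    unfold F
    simp only
    rw [hcast]
    have hiN : (i:ℝ) ≤ (N:ℝ) := by exact_mod_cast hle
    have h1 : ((i:ℝ)+1) ≠ 0 := by positivity
    have h2 : ((N:ℝ) - (i:ℝ) + 1) ≠ 0 := by nlinarith
    have h3 : ((N:ℝ)+2) ≠ 0 := by positivity
    have hsum3 : (i:ℝ) + ((N:ℝ) - (i:ℝ)) + 2 = (N:ℝ) + 2 := by ring
    rw [hsum3]
    field_simp
    ring
  rw [Finset.sum_congr rfl key, ← Finset.mul_sum, Finset.sum_add_distrib]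
  have hrefl : ∑ i ∈ Finset.range (N+1), 1/((((N-i : ℕ)):ℝ)+1)
      = ∑ i ∈ Finset.range (N+1), 1/((i:ℝ)+1) := by
    have := Finset.sum_range_reflect (fun i : ℕ => 1/((i:ℝ)+1)) (N+1)
    simpa using this
  rw [hrefl]
  have : ∑ i ∈ Finset.range (N+1), 1/((i:ℝ)+1) = Hn (N+1) := rfl
  rw [this]
  ring

lemma diag_F (s : ℕ → ℝ) (hs : ∀ N, |s N| ≤ 1) :
    ∑' p : ℕ × ℕ, s (p.1 + p.2) * F p
      = ∑' N : ℕ, s N * (2 * Hn (N+1) / ((N:ℝ)+2)^2) := by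
  have hsum := summable_wF (fun p => s (p.1 + p.2)) (fun p => hs _)
  have h1 : Summable (fun q : (Σ N : ℕ, Fin (N+1)) =>
      s ((diagEquiv q).1 + (diagEquiv q).2) * F (diagEquiv q)) :=
    hsum.comp_injective diagEquiv.injective
  calc ∑' p : ℕ × ℕ, s (p.1 + p.2) * F p
      = ∑' q : (Σ N : ℕ, Fin (N+1)), s ((diagEquiv q).1 + (diagEquiv q).2) * F (diagEquiv q) :=
        (diagEquiv.tsum_eq (fun p : ℕ × ℕ => s (p.1 + p.2) * F p)).symm
  _ = ∑' N : ℕ, ∑' i : Fin (N+1),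
        s ((diagEquiv ⟨N, i⟩).1 + (diagEquiv ⟨N, i⟩).2) * F (diagEquiv ⟨N, i⟩) := Summable.tsum_sigma h1
  _ = ∑' N : ℕ, s N * (2 * Hn (N+1) / ((N:ℝ)+2)^2) := by
      apply tsum_congr
      intro N
      rw [tsum_fintype]
      have hd : ∀ i : Fin (N+1), diagEquiv ⟨N, i⟩ = ((i : ℕ), N - (i : ℕ)) := fun i => rfl
      calc ∑ i : Fin (N+1), s ((diagEquiv ⟨N, i⟩).1 + (diagEquiv ⟨N, i⟩).2) * F (diagEquiv ⟨N, i⟩)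
          = ∑ i : Fin (N+1), s N * F ((i : ℕ), N - (i : ℕ)) := by
            apply Finset.sum_congr rfl
            intro i _
            rw [hd i]
            have h : ((i : ℕ)) + (N - (i : ℕ)) = N := by omega
            simp only [h]
      _ = s N * ∑ i : Fin (N+1), F ((i : ℕ), N - (i : ℕ)) := by rw [Finset.mul_sum]
      _ = s N * ∑ i ∈ Finset.range (N+1), F (i, N - i) := by
          rw [Fin.sum_univ_eq_sum_range (fun i => F (i, N - i))]
      _ = s N * (2 * Hn (N+1) / ((N:ℝ)+2)^2) := by rw [diag_finsum]

lemma summable_sign (s : ℕ → ℝ) (hs : ∀ n, |s n| ≤ 1) (g : ℕ → ℝ) (hg : Summable g)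
    (hgpos : ∀ n, 0 ≤ g n) : Summable (fun n => s n * g n) := by
  apply Summable.of_abs
  refine Summable.of_nonneg_of_le (fun n => abs_nonneg _) ?_ hg
  intro n
  rw [abs_mul]
  calc |s n| * |g n| ≤ 1 * |g n| := mul_le_mul_of_nonneg_right (hs n) (abs_nonneg _)
  _ = g n := by rw [one_mul, abs_of_nonneg (hgpos n)]

lemma Sh1 : Summable (fun N : ℕ => Hn (N+1) / ((N:ℝ)+2)^2) := by
  have h0 := (summable_nat_add_iff (f := fun m : ℕ => Hn (m+1) / ((m:ℝ)+1)^2) 1).2 summable_h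
  refine Summable.of_nonneg_of_le ?_ ?_ h0
  · intro N
    have := Hn_nonneg (N+1)
    positivity
  · intro N
    have hc : ((N+1:ℕ):ℝ) = (N:ℝ)+1 := by push_cast; ring
    simp only [hc]
    have h2 : (N:ℝ)+1+1 = (N:ℝ)+2 := by ring
    rw [h2]
    have h1 : Hn (N+1) ≤ Hn (N+1+1) := by
      have h4 := Hn_succ (N+1)
      have h3 : (0:ℝ) ≤ 1/(((N+1:ℕ):ℝ)+1) := by positivity
      linarith
    gcongr

lemma Sz3' : Summable (fun N : ℕ => 1/((N:ℝ)+2)^3) := by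
  have h0 := (summable_nat_add_iff (f := fun m : ℕ => 1 / ((m:ℝ)+1)^3) 1).2 Sz3
  apply h0.congr
  intro N
  push_cast
  ring_nf

lemma zeta3_shift : ∑' N : ℕ, 1/((N:ℝ)+2)^3 = zeta3 - 1 := by
  have h := Summable.tsum_eq_zero_add Sz3
  rw [show zeta3 = ∑' k : ℕ, 1/((k:ℝ)+1)^3 from rfl, h]
  have : ∀ N : ℕ, 1/(((N+1:ℕ):ℝ)+1)^3 = 1/((N:ℝ)+2)^3 := by
    intro N; push_cast; ring_nf
  rw [tsum_congr this]
  norm_num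

lemma shift_eval (s : ℕ → ℝ) (hs : ∀ n, |s n| ≤ 1) :
    ∑' n : ℕ, s n * (Hn (n+1)/((n:ℝ)+1)^2)
      = s 0 + (∑' N : ℕ, s (N+1) * (Hn (N+1)/((N:ℝ)+2)^2)
          + ∑' N : ℕ, s (N+1) * (1/((N:ℝ)+2)^3)) := by
  have hsum : Summable (fun n => s n * (Hn (n+1)/((n:ℝ)+1)^2)) :=
    summable_sign s hs _ summable_h (fun n => by have := Hn_nonneg (n+1); positivity)
  rw [Summable.tsum_eq_zero_add hsum]
  have hterm : ∀ N : ℕ, s (N+1) * (Hn (N+1+1)/(((N+1:ℕ):ℝ)+1)^2)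
      = s (N+1) * (Hn (N+1)/((N:ℝ)+2)^2) + s (N+1) * (1/((N:ℝ)+2)^3) := by
    intro N
    have hc : ((N+1:ℕ):ℝ) = (N:ℝ)+1 := by push_cast; ring
    rw [hc, Hn_succ]
    rw [hc]
    have h2 : (N:ℝ)+1+1 = (N:ℝ)+2 := by ring
    rw [h2]
    have h3 : ((N:ℝ)+2) ≠ 0 := by positivity
    field_simp
  rw [tsum_congr hterm]
  have hs1 : Summable (fun N : ℕ => s (N+1) * (Hn (N+1)/((N:ℝ)+2)^2)) :=
    summable_sign _ (fun n => hs _) _ Sh1 (fun N => by have := Hn_nonneg (N+1); positivity)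
  have hs2 : Summable (fun N : ℕ => s (N+1) * (1/((N:ℝ)+2)^3)) :=
    summable_sign _ (fun n => hs _) _ Sz3' (fun N => by positivity)
  rw [Summable.tsum_add hs1 hs2]
  congr 1
  have h1 : Hn 1 = 1 := by rw [show (1:ℕ) = 0+1 from rfl, Hn_succ, Hn_zero]; norm_num
  norm_num [h1]

lemma SA_eq : ∑' n : ℕ, Hn (n+1)/((n:ℝ)+1)^2 = 2 * zeta3 := by
  have ht : ∀ m : ℕ, |(1:ℝ)| ≤ 1 := fun _ => by norm_num
  have h1 := fubini_F (fun _ => (1:ℝ)) ht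
  have h2 := diag_F (fun _ => (1:ℝ)) ht
  simp only [one_mul] at h1 h2
  have h2' : ∑' N : ℕ, 2*Hn (N+1)/((N:ℝ)+2)^2 = 2 * ∑' N : ℕ, Hn (N+1)/((N:ℝ)+2)^2 := by
    rw [← tsum_mul_left]
    apply tsum_congr; intro N; ring
  have h3 := shift_eval (fun _ => (1:ℝ)) ht
  simp only [one_mul] at h3
  rw [zeta3_shift] at h3
  rw [h2'] at h2
  rw [h1] at h2
  linarith [h2, h3]

set_option maxHeartbeats 1000000 in
lemma eta_eq : ∑' n : ℕ, (-1:ℝ)^n * (1/((n:ℝ)+1)^3) = 3/4 * zeta3 := by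
  have hz : Summable (fun n : ℕ => 1/((n:ℝ)+1)^3) := Sz3
  have hinj2 : Function.Injective (fun j : ℕ => 2*j) := fun a b h => by
    simp only at h; omega
  have hinj2' : Function.Injective (fun j : ℕ => 2*j+1) := fun a b h => by
    simp only at h; omega
  have hze : Summable (fun j : ℕ => 1/(((2*j:ℕ):ℝ)+1)^3) := hz.comp_injective hinj2
  have hzo : Summable (fun j : ℕ => 1/(((2*j+1:ℕ):ℝ)+1)^3) := hz.comp_injective hinj2'
  have hsplitz := tsum_even_add_odd (f := fun n : ℕ => 1/((n:ℝ)+1)^3) hze hzo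
  have hodd : ∑' j : ℕ, 1/(((2*j+1:ℕ):ℝ)+1)^3 = 1/8 * zeta3 := by
    have hp : ∀ j : ℕ, 1/(((2*j+1:ℕ):ℝ)+1)^3 = (1/8) * (1/((j:ℝ)+1)^3) := by
      intro j
      push_cast
      have h1 : ((j:ℝ)+1) ≠ 0 := by positivity
      have h2 : (2*(j:ℝ)+1+1) ≠ 0 := by positivity
      field_simp
      ring
    rw [tsum_congr hp, tsum_mul_left]
    rw [show zeta3 = ∑' k : ℕ, 1/((k:ℝ)+1)^3 from rfl]
  have hg : Summable (fun n : ℕ => (-1:ℝ)^n * (1/((n:ℝ)+1)^3)) :=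
    summable_sign _ (fun n => by rw [abs_pow, abs_neg, abs_one, one_pow]) _ Sz3
      (fun n => by positivity)
  have hge : Summable (fun j : ℕ => (-1:ℝ)^(2*j) * (1/(((2*j:ℕ):ℝ)+1)^3)) := hg.comp_injective hinj2
  have hgo : Summable (fun j : ℕ => (-1:ℝ)^(2*j+1) * (1/(((2*j+1:ℕ):ℝ)+1)^3)) :=
    hg.comp_injective hinj2'
  have hsplitg := tsum_even_add_odd (f := fun n : ℕ => (-1:ℝ)^n * (1/((n:ℝ)+1)^3)) hge hgo
  have he1 : ∑' j : ℕ, (-1:ℝ)^(2*j) * (1/(((2*j:ℕ):ℝ)+1)^3) = ∑' j : ℕ, 1/(((2*j:ℕ):ℝ)+1)^3 := by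
    apply tsum_congr; intro j
    have : (-1:ℝ)^(2*j) = 1 := by rw [pow_mul]; norm_num
    rw [this, one_mul]
  have he2 : ∑' j : ℕ, (-1:ℝ)^(2*j+1) * (1/(((2*j+1:ℕ):ℝ)+1)^3)
      = - ∑' j : ℕ, 1/(((2*j+1:ℕ):ℝ)+1)^3 := by
    rw [← tsum_neg]
    apply tsum_congr; intro j
    have : (-1:ℝ)^(2*j+1) = -1 := by rw [pow_succ, pow_mul]; norm_num
    rw [this]
    ring
  rw [he1, he2, hodd] at hsplitg
  rw [hodd] at hsplitz
  rw [show (∑' n : ℕ, 1/((n:ℝ)+1)^3) = zeta3 from rfl] at hsplitz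
  linarith [hsplitg, hsplitz]

lemma hinj2 : Function.Injective (fun j : ℕ => 2*j) := fun a b h => by
  simp only at h; omega

lemma hinj2' : Function.Injective (fun j : ℕ => 2*j+1) := fun a b h => by
  simp only at h; omega

lemma neg_one_pow_abs_le (n : ℕ) : |(-1:ℝ)^n| ≤ 1 := by
  rw [abs_pow, abs_neg, abs_one, one_pow]

lemma one_add_neg_one_pow_abs (k : ℕ) : |1+(-1:ℝ)^k| ≤ 2 := by
  rcases Nat.even_or_odd k with h | h
  · rw [h.neg_one_pow]; norm_num
  · rw [h.neg_one_pow]; norm_num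

lemma neg_one_pow_even (j : ℕ) : (-1:ℝ)^(2*j) = 1 := by
  rw [pow_mul]; norm_num

lemma neg_one_pow_odd (j : ℕ) : (-1:ℝ)^(2*j+1) = -1 := by
  rw [pow_succ, neg_one_pow_even]; norm_num

lemma F_oddodd (i j : ℕ) : F (2*i+1, 2*j+1) = (1/8) * F (i, j) := by
  unfold F
  simp only
  push_cast
  have h1 : ((i:ℝ)+1) ≠ 0 := by positivity
  have h2 : ((j:ℝ)+1) ≠ 0 := by positivity
  have h3 : ((i:ℝ)+(j:ℝ)+2) ≠ 0 := by positivity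
  have h4 : (2*(i:ℝ)+1+1) ≠ 0 := by positivity
  have h5 : (2*(j:ℝ)+1+1) ≠ 0 := by positivity
  have h6 : (2*(i:ℝ)+1+(2*(j:ℝ)+1)+2) ≠ 0 := by positivity
  field_simp
  ring

lemma F_swap (a b : ℕ) : F (b, a) = F (a, b) := by
  unfold F
  simp only
  ring_nf

noncomputable def G : ℕ × ℕ → ℝ :=
  fun p => (1+(-1:ℝ)^(p.1+1))*(1+(-1:ℝ)^(p.2+1))/4 * F p

lemma G_bound (p : ℕ × ℕ) : |(1+(-1:ℝ)^(p.1+1))*(1+(-1:ℝ)^(p.2+1))/4| ≤ 1 := by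
  have h1 := one_add_neg_one_pow_abs (p.1+1)
  have h2 := one_add_neg_one_pow_abs (p.2+1)
  rw [abs_div, abs_mul, show |(4:ℝ)| = 4 by norm_num, div_le_one (by norm_num)]
  have h3 : |1+(-1:ℝ)^(p.1+1)| * |1+(-1:ℝ)^(p.2+1)| ≤ 2 * 2 :=
    mul_le_mul h1 h2 (abs_nonneg _) (by norm_num)
  linarith

lemma summable_G : Summable G := summable_wF _ G_bound

set_option maxHeartbeats 1000000 in
lemma SG_eq_eighth : ∑' p : ℕ × ℕ, G p = (∑' p : ℕ × ℕ, F p) / 8 := by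
  have hGprod := Summable.tsum_prod summable_G
  have hinner : ∀ m : ℕ, ∑' n : ℕ, G (m, n)
      = ((1+(-1:ℝ)^(m+1))/2) * ∑' j : ℕ, F (m, 2*j+1) := by
    intro m
    have hsm : Summable (fun n => G (m, n)) := summable_G.prod_factor m
    have he : Summable (fun j => G (m, 2*j)) := hsm.comp_injective hinj2
    have ho : Summable (fun j => G (m, 2*j+1)) := hsm.comp_injective hinj2'
    have hsplit := tsum_even_add_odd (f := fun n => G (m, n)) he ho
    have hzero : ∑' j : ℕ, G (m, 2*j) = 0 := by
      have hp : ∀ j : ℕ, G (m, 2*j) = 0 := by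
        intro j
        unfold G
        simp only
        rw [neg_one_pow_odd]
        ring
      rw [tsum_congr hp, tsum_zero]
    have hoddv : ∀ j : ℕ, G (m, 2*j+1) = ((1+(-1:ℝ)^(m+1))/2) * F (m, 2*j+1) := by
      intro j
      unfold G
      simp only
      have : (2*j+1)+1 = 2*(j+1) := by ring
      rw [this, neg_one_pow_even]
      ring
    rw [hzero, tsum_congr hoddv, tsum_mul_left] at hsplit
    rw [← hsplit]
    ring
  have hout : Summable (fun m : ℕ => ∑' n : ℕ, G (m, n)) :=
    (summable_G.hasSum.prod_fiberwise (fun m => (summable_G.prod_factor m).hasSum)).summable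
  have hout' : Summable (fun m : ℕ => ((1+(-1:ℝ)^(m+1))/2) * ∑' j : ℕ, F (m, 2*j+1)) :=
    hout.congr hinner
  have houtsplit := tsum_even_add_odd
    (f := fun m : ℕ => ((1+(-1:ℝ)^(m+1))/2) * ∑' j : ℕ, F (m, 2*j+1))
    (hout'.comp_injective hinj2) (hout'.comp_injective hinj2')
  have hevenzero : ∑' i : ℕ, ((1+(-1:ℝ)^(2*i+1))/2) * ∑' j : ℕ, F (2*i, 2*j+1) = 0 := by
    have hp : ∀ i : ℕ, ((1+(-1:ℝ)^(2*i+1))/2) * ∑' j : ℕ, F (2*i, 2*j+1) = 0 := by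
      intro i
      rw [neg_one_pow_odd]
      ring
    rw [tsum_congr hp, tsum_zero]
  have hoddval : ∀ i : ℕ, ((1+(-1:ℝ)^(2*i+1+1))/2) * ∑' j : ℕ, F (2*i+1, 2*j+1)
      = (1/8) * (Hn (i+1) / ((i:ℝ)+1)^2) := by
    intro i
    have : (2*i+1)+1 = 2*(i+1) := by ring
    rw [this, neg_one_pow_even]
    have hF : ∑' j : ℕ, F (2*i+1, 2*j+1) = (1/8) * (Hn (i+1) / ((i:ℝ)+1)^2) := by
      have hp : ∀ j : ℕ, F (2*i+1, 2*j+1) = (1/8) * F (i, j) := fun j => F_oddodd i j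
      rw [tsum_congr hp, tsum_mul_left, F_inner]
    rw [hF]
    ring
  rw [hevenzero, tsum_congr hoddval, tsum_mul_left] at houtsplit
  -- houtsplit : 0 + 1/8 * ∑' i, Hn (i+1)/((i:ℝ)+1)^2 = ∑' m, ((1+(-1)^(m+1))/2) * ∑' j, F (m,2*j+1)
  have hAs : ∑' p : ℕ × ℕ, F p = ∑' i : ℕ, Hn (i+1)/((i:ℝ)+1)^2 := by
    have h1 := fubini_F (fun _ => (1:ℝ)) (fun _ => by norm_num)
    simpa using h1
  rw [hGprod, tsum_congr hinner, ← houtsplit, hAs]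
  ring

set_option maxHeartbeats 1000000 in
lemma key_parity :
    (∑' p : ℕ × ℕ, F p) + (∑' p : ℕ × ℕ, (-1:ℝ)^(p.1+p.2) * F p)
      + 2 * (∑' p : ℕ × ℕ, (-1:ℝ)^(p.1+1) * F p) = (∑' p : ℕ × ℕ, F p) / 2 := by
  have hA := summable_F
  have hC : Summable (fun p : ℕ × ℕ => (-1:ℝ)^(p.1+p.2) * F p) :=
    summable_wF _ (fun p => neg_one_pow_abs_le _)
  have hC1 : Summable (fun p : ℕ × ℕ => (-1:ℝ)^(p.1+1) * F p) :=
    summable_wF _ (fun p => neg_one_pow_abs_le _)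
  have hC2 : Summable (fun p : ℕ × ℕ => (-1:ℝ)^(p.2+1) * F p) :=
    summable_wF _ (fun p => neg_one_pow_abs_le _)
  have hswap : ∑' p : ℕ × ℕ, (-1:ℝ)^(p.2+1) * F p = ∑' p : ℕ × ℕ, (-1:ℝ)^(p.1+1) * F p := by
    rw [← (Equiv.prodComm ℕ ℕ).tsum_eq (fun p : ℕ × ℕ => (-1:ℝ)^(p.2+1) * F p)]
    apply tsum_congr
    rintro ⟨a, b⟩
    show (-1:ℝ)^(a+1) * F (b, a) = (-1:ℝ)^(a+1) * F (a, b)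
    rw [F_swap b a]
  have hGexp : ∀ p : ℕ × ℕ, G p
      = (1/4) * (F p + (-1:ℝ)^(p.1+p.2) * F p + ((-1:ℝ)^(p.1+1) * F p + (-1:ℝ)^(p.2+1) * F p)) := by
    intro p
    unfold G
    have hab : (-1:ℝ)^(p.1+1) * (-1:ℝ)^(p.2+1) = (-1:ℝ)^(p.1+p.2) := by
      rw [← pow_add, show p.1+1+(p.2+1) = (p.1+p.2)+2 by ring, pow_add]
      norm_num
    rw [← hab]
    ring
  have hSG : ∑' p : ℕ × ℕ, G p
      = (1/4) * ((∑' p : ℕ × ℕ, F p) + (∑' p : ℕ × ℕ, (-1:ℝ)^(p.1+p.2) * F p)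
        + ((∑' p : ℕ × ℕ, (-1:ℝ)^(p.1+1) * F p) + (∑' p : ℕ × ℕ, (-1:ℝ)^(p.2+1) * F p))) := by
    rw [tsum_congr hGexp, tsum_mul_left, Summable.tsum_add (hA.add hC) (hC1.add hC2),
      Summable.tsum_add hA hC, Summable.tsum_add hC1 hC2]
  rw [SG_eq_eighth, hswap] at hSG
  linarith [hSG]

set_option maxHeartbeats 1000000 in
lemma E_eq : ∑' n : ℕ, (-1:ℝ)^n * (Hn (n+1)/((n:ℝ)+1)^2) = 5/8 * zeta3 := by
  have hA : ∑' p : ℕ × ℕ, F p = 2 * zeta3 := by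
    have h1 := fubini_F (fun _ => (1:ℝ)) (fun _ => by norm_num)
    simp only [one_mul] at h1
    rw [h1, SA_eq]
  have hC' : ∑' p : ℕ × ℕ, (-1:ℝ)^(p.1+1) * F p
      = - ∑' n : ℕ, (-1:ℝ)^n * (Hn (n+1)/((n:ℝ)+1)^2) := by
    have h1 := fubini_F (fun m => (-1:ℝ)^(m+1)) (fun m => neg_one_pow_abs_le _)
    rw [h1, ← tsum_neg]
    apply tsum_congr
    intro m
    rw [pow_succ]
    ring
  have hC : ∑' p : ℕ × ℕ, (-1:ℝ)^(p.1+p.2) * F p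
      = 2 * ∑' N : ℕ, (-1:ℝ)^N * (Hn (N+1)/((N:ℝ)+2)^2) := by
    have h1 := diag_F (fun N => (-1:ℝ)^N) (fun N => neg_one_pow_abs_le _)
    rw [h1, ← tsum_mul_left]
    apply tsum_congr
    intro N
    ring
  have h3 : ∑' n : ℕ, (-1:ℝ)^n * (Hn (n+1)/((n:ℝ)+1)^2)
      = 1 + (∑' N : ℕ, (-1:ℝ)^(N+1) * (Hn (N+1)/((N:ℝ)+2)^2)
          + ∑' N : ℕ, (-1:ℝ)^(N+1) * (1/((N:ℝ)+2)^3)) := by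
    have := shift_eval (fun n => (-1:ℝ)^n) (fun n => neg_one_pow_abs_le _)
    simpa using this
  have hneg1 : ∑' N : ℕ, (-1:ℝ)^(N+1) * (Hn (N+1)/((N:ℝ)+2)^2)
      = - ∑' N : ℕ, (-1:ℝ)^N * (Hn (N+1)/((N:ℝ)+2)^2) := by
    rw [← tsum_neg]
    apply tsum_congr
    intro N
    rw [pow_succ]
    ring
  have hneg2 : ∑' N : ℕ, (-1:ℝ)^(N+1) * (1/((N:ℝ)+2)^3)
      = - ∑' N : ℕ, (-1:ℝ)^N * (1/((N:ℝ)+2)^3) := by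
    rw [← tsum_neg]
    apply tsum_congr
    intro N
    rw [pow_succ]
    ring
  rw [hneg1, hneg2] at h3
  have hgsum : Summable (fun n : ℕ => (-1:ℝ)^n * (1/((n:ℝ)+1)^3)) :=
    summable_sign _ (fun n => neg_one_pow_abs_le _) _ Sz3 (fun n => by positivity)
  have heta_shift : ∑' N : ℕ, (-1:ℝ)^N * (1/((N:ℝ)+2)^3)
      = 1 - ∑' n : ℕ, (-1:ℝ)^n * (1/((n:ℝ)+1)^3) := by
    have h0 := Summable.tsum_eq_zero_add hgsum
    have hc : ∀ N : ℕ, (-1:ℝ)^(N+1) * (1/(((N+1:ℕ):ℝ)+1)^3)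
        = -((-1:ℝ)^N * (1/((N:ℝ)+2)^3)) := by
      intro N
      have h5 : ((N+1:ℕ):ℝ) = (N:ℝ)+1 := by push_cast; ring
      rw [h5, pow_succ, show (N:ℝ)+1+1 = (N:ℝ)+2 by ring]
      ring
    rw [tsum_congr hc, tsum_neg] at h0
    norm_num at h0
    simp only [one_div]
    linarith [h0]
  have hkey := key_parity
  rw [hA, hC, hC'] at hkey
  rw [heta_shift, eta_eq] at h3
  linarith [hkey, h3]

noncomputable def Q : ℕ × ℕ → ℝ :=
  fun p => 1/(((p.1:ℝ)+1)*((p.2:ℝ)+1)*(2*(p.2:ℝ)+(p.1:ℝ)+3))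

lemma summable_Q : Summable Q := by
  refine Summable.of_nonneg_of_le (fun p => by unfold Q; positivity) ?_ summable_F
  rintro ⟨k, j⟩
  unfold Q F
  simp only
  apply one_div_le_one_div_of_le
  · positivity
  · have h1 : (0:ℝ) ≤ (k:ℝ)+1 := by positivity
    have h2 : (0:ℝ) ≤ (j:ℝ)+1 := by positivity
    have h3 : (k:ℝ)+(j:ℝ)+2 ≤ 2*(j:ℝ)+(k:ℝ)+3 := by
      have : (0:ℝ) ≤ (j:ℝ) := Nat.cast_nonneg j
      linarith
    have h4 : (0:ℝ) ≤ ((k:ℝ)+1)*((j:ℝ)+1) := by positivity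
    calc ((k:ℝ)+1)*((j:ℝ)+1)*((k:ℝ)+(j:ℝ)+2)
        ≤ ((k:ℝ)+1)*((j:ℝ)+1)*(2*(j:ℝ)+(k:ℝ)+3) := by
          apply mul_le_mul_of_nonneg_left h3 h4

lemma Q_inner (j : ℕ) : ∑' k : ℕ, Q (k, j) = Hn (2*j+2) / (2*((j:ℝ)+1)^2) := by
  have hp : ∀ k : ℕ, Q (k, j)
      = (1/((j:ℝ)+1)) * (1/(((k:ℝ)+1)*((k:ℝ)+1+((2*j+2:ℕ):ℝ)))) := by
    intro k
    unfold Q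
    simp only
    push_cast
    have h1 : ((k:ℝ)+1) ≠ 0 := by positivity
    have h2 : ((j:ℝ)+1) ≠ 0 := by positivity
    have h3 : ((k:ℝ)+1+(2*(j:ℝ)+2)) ≠ 0 := by positivity
    have h4 : (2*(j:ℝ)+(k:ℝ)+3) ≠ 0 := by positivity
    rw [show (k:ℝ)+1+(2*(j:ℝ)+2) = 2*(j:ℝ)+(k:ℝ)+3 by ring]
    field_simp
  rw [tsum_congr hp, tsum_mul_left, tsum_tele' (2*j+2) (by omega)]
  have hc : ((2*j+2:ℕ):ℝ) = 2*((j:ℝ)+1) := by push_cast; ring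
  rw [hc, div_mul_div_comm, one_mul]
  congr 1
  ring

lemma odd_sum_eq : ∑' j : ℕ, Hn (2*j+1+1) / (((2*j+1:ℕ):ℝ)+1)^2 = 11/16 * zeta3 := by
  have hse : Summable (fun j : ℕ => Hn (2*j+1) / (((2*j:ℕ):ℝ)+1)^2) :=
    summable_h.comp_injective hinj2
  have hso : Summable (fun j : ℕ => Hn (2*j+1+1) / (((2*j+1:ℕ):ℝ)+1)^2) :=
    summable_h.comp_injective hinj2'
  have hsplit := tsum_even_add_odd (f := fun n : ℕ => Hn (n+1) / ((n:ℝ)+1)^2) hse hso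
  rw [SA_eq] at hsplit
  have hg : Summable (fun n : ℕ => (-1:ℝ)^n * (Hn (n+1)/((n:ℝ)+1)^2)) :=
    summable_sign _ (fun n => neg_one_pow_abs_le _) _ summable_h
      (fun n => by have := Hn_nonneg (n+1); positivity)
  have hge : Summable (fun j : ℕ => (-1:ℝ)^(2*j) * (Hn (2*j+1)/(((2*j:ℕ):ℝ)+1)^2)) :=
    hg.comp_injective hinj2
  have hgo : Summable (fun j : ℕ => (-1:ℝ)^(2*j+1) * (Hn (2*j+1+1)/(((2*j+1:ℕ):ℝ)+1)^2)) :=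
    hg.comp_injective hinj2'
  have hsplitE := tsum_even_add_odd
    (f := fun n : ℕ => (-1:ℝ)^n * (Hn (n+1)/((n:ℝ)+1)^2)) hge hgo
  rw [E_eq] at hsplitE
  have he1 : ∑' j : ℕ, (-1:ℝ)^(2*j) * (Hn (2*j+1)/(((2*j:ℕ):ℝ)+1)^2)
      = ∑' j : ℕ, Hn (2*j+1) / (((2*j:ℕ):ℝ)+1)^2 := by
    apply tsum_congr
    intro j
    rw [neg_one_pow_even, one_mul]
  have he2 : ∑' j : ℕ, (-1:ℝ)^(2*j+1) * (Hn (2*j+1+1)/(((2*j+1:ℕ):ℝ)+1)^2)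
      = - ∑' j : ℕ, Hn (2*j+1+1) / (((2*j+1:ℕ):ℝ)+1)^2 := by
    rw [← tsum_neg]
    apply tsum_congr
    intro j
    rw [neg_one_pow_odd]
    ring
  rw [he1, he2] at hsplitE
  linarith [hsplit, hsplitE]

theorem stmt4 :
    ∑' k : ℕ, Hreal (((k : ℝ)+1)/2) / ((k : ℝ)+1)^2 = 11/8 * zeta3 := by
  have step1 : ∀ k : ℕ, Hreal (((k:ℝ)+1)/2) / ((k:ℝ)+1)^2 = ∑' j : ℕ, Q (k, j) := by
    intro k
    unfold Hreal
    rw [← tsum_div_const]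
    apply tsum_congr
    intro j
    unfold Q
    simp only
    have h1 : ((j:ℝ)+1) ≠ 0 := by positivity
    have h2 : ((k:ℝ)+1) ≠ 0 := by positivity
    have h3 : ((j:ℝ)+1+((k:ℝ)+1)/2) ≠ 0 := by positivity
    have h4 : (2*(j:ℝ)+(k:ℝ)+3) ≠ 0 := by positivity
    field_simp
    ring
  rw [tsum_congr step1]
  have step2 : ∑' k : ℕ, ∑' j : ℕ, Q (k, j) = ∑' p : ℕ × ℕ, Q p :=
    (Summable.tsum_prod summable_Q).symm
  rw [step2]
  have hR : Summable (fun p : ℕ × ℕ => Q (p.2, p.1)) := by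
    have := (Equiv.prodComm ℕ ℕ).summable_iff.2 summable_Q
    apply this.congr
    intro p
    rfl
  have step3 : ∑' p : ℕ × ℕ, Q p = ∑' j : ℕ, ∑' k : ℕ, Q (k, j) := by
    rw [← (Equiv.prodComm ℕ ℕ).tsum_eq Q]
    have : ∑' p : ℕ × ℕ, Q ((Equiv.prodComm ℕ ℕ) p) = ∑' p : ℕ × ℕ, Q (p.2, p.1) := by
      apply tsum_congr
      rintro ⟨a, b⟩
      rfl
    rw [this, Summable.tsum_prod hR]
  rw [step3, tsum_congr Q_inner]
  have hfinal : ∀ j : ℕ, Hn (2*j+2) / (2*((j:ℝ)+1)^2)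
      = 2 * (Hn (2*j+1+1) / (((2*j+1:ℕ):ℝ)+1)^2) := by
    intro j
    have hc : ((2*j+1:ℕ):ℝ) = 2*(j:ℝ)+1 := by push_cast; ring
    rw [hc, show (2*j+1)+1 = 2*j+2 from rfl]
    have h1 : ((j:ℝ)+1) ≠ 0 := by positivity
    have h2 : (2*(j:ℝ)+1+1) ≠ 0 := by positivity
    rw [show 2*(j:ℝ)+1+1 = 2*((j:ℝ)+1) by ring]
    field_simp
  rw [tsum_congr hfinal, tsum_mul_left, odd_sum_eq]
  ring
end
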